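/- arXiv:2010.14620 — 2 statements merged into one kernel-verified Lean document; each statement's English description precedes it below -/
import Mathlib

section
/- Let S ⊆ V be a seed set, extend π* to all of V by setting π*_i := 1 for i ∈ S, and for q ∈ [0,1] define the edge set E(q) := {(k, j) ∈ E : π*_k > π*_j and q ∉ [π*_k − 1 + p(k, j), π*_k]} ∪ {(k, j) ∈ E : π*_k ≤ π*_j and q ∈ (0, p(k, j)]}. Then, taking q̃ uniformly distributed on [0,1], the expected number of influenced nodes of the random scenario E(q̃) equals the worst-case expected influence: ∫_0^1 R(E(q), S) dq = |S| + Σ_{i ∈ V \ S} π*_i = f^corr(S). -/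
open scoped BigOperators

namespace CorrIM

variable {V : Type*} [Fintype V] [DecidableEq V]

/-- A node `i` is influenced: `i ∈ S`, or `i` is reachable from some node of `S`
along the live edges of the scenario `c`. -/
def influenced (c : Finset (V × V)) (S : Finset V) (i : V) : Prop :=
  ∃ s ∈ S, Relation.ReflTransGen (fun a b : V => (a, b) ∈ c) s i

/-- `R c S` : the number of influenced nodes in scenario `c` with seed set `S`. -/
noncomputable def R (c : Finset (V × V)) (S : Finset V) : ℕ :=
  Set.ncard {i : V | influenced c S i}

/-- The Fréchet class `Θ` : probability distributions on scenarios (subsets of `E`)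
whose marginals agree with the edge likelihoods `p`. -/
def memTheta (E : Finset (V × V)) (p : V × V → ℝ) (θ : Finset (V × V) → ℝ) : Prop :=
  (∀ c, 0 ≤ θ c) ∧ (∀ c, θ c ≠ 0 → c ⊆ E) ∧ (∑ c : Finset (V × V), θ c) = 1 ∧
    ∀ e ∈ E, (∑ c : Finset (V × V), if e ∈ c then θ c else 0) = p e

/-- Expected number of influenced nodes under the distribution `θ`. -/
noncomputable def expInf (θ : Finset (V × V) → ℝ) (S : Finset V) : ℝ :=
  ∑ c : Finset (V × V), θ c * (R c S : ℝ)

/-- The correlation robust influence function `f^corr`. -/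
noncomputable def fcorr (E : Finset (V × V)) (p : V × V → ℝ) (S : Finset V) : ℝ :=
  sInf {x : ℝ | ∃ θ, memTheta E p θ ∧ x = expInf θ S}

open Classical in
/-- Probability of the event `A` under the distribution `θ`. -/
noncomputable def prob (θ : Finset (V × V) → ℝ) (A : Finset (V × V) → Prop) : ℝ :=
  ∑ c : Finset (V × V), if A c then θ c else 0

/-- `γ` (a list of nodes `i₀, i₁, …, i_λ`, `λ ≥ 1`) is a directed path from the
seed set `S` to the node `i` using edges of `E`. -/
def IsPathFrom (E : Finset (V × V)) (S : Finset V) (i : V) (γ : List V) : Prop :=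
  2 ≤ γ.length ∧ (∃ s ∈ S, γ.head? = some s) ∧ γ.getLast? = some i ∧
    γ.Chain' (fun a b : V => (a, b) ∈ E)

/-- The list of edges `(i₀,i₁), …, (i_{λ-1}, i_λ)` of a path `γ = [i₀, …, i_λ]`. -/
def pathEdges (γ : List V) : List (V × V) := γ.zip γ.tail

/-- The weight `L(γ) = 1 - ∑_{l=1}^{λ} (1 - p(i_{l-1}, i_l))` of a path. -/
noncomputable def L (p : V × V → ℝ) (γ : List V) : ℝ :=
  1 - ((pathEdges γ).map (fun e => 1 - p e)).sum

/-- `π*_i = max(0, max_{γ ∈ Γ(S,i)} L(γ))`, with value `0` when `Γ(S,i) = ∅`. -/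
noncomputable def piStar (E : Finset (V × V)) (p : V × V → ℝ) (S : Finset V) (i : V) : ℝ :=
  sSup (insert 0 {x : ℝ | ∃ γ : List V, IsPathFrom E S i γ ∧ x = L p γ})

/-- The independent cascade distribution `θ_ic` : each edge of `E` is live
independently with probability `p e`. -/
noncomputable def thetaIC (E : Finset (V × V)) (p : V × V → ℝ) (c : Finset (V × V)) : ℝ :=
  if c ⊆ E then (∏ e ∈ c, p e) * ∏ e ∈ E \ c, (1 - p e) else 0

/-- The independent cascade influence function `f^ic`. -/
noncomputable def fic (E : Finset (V × V)) (p : V × V → ℝ) (S : Finset V) : ℝ :=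
  expInf (thetaIC E p) S


/-- `π*` extended to all of `V` by setting `π*_i := 1` for `i ∈ S`. -/
noncomputable def extPi (E : Finset (V × V)) (p : V × V → ℝ) (S : Finset V) (i : V) : ℝ :=
  if i ∈ S then 1 else piStar E p S i

open Classical in
/-- The scenario `E(q)` of live edges determined by the single random number `q`:
`E(q) = {(k,j) ∈ E : π*_k > π*_j, q ∉ [π*_k - 1 + p(k,j), π*_k]}
      ∪ {(k,j) ∈ E : π*_k ≤ π*_j, q ∈ (0, p(k,j)]}`. -/
noncomputable def liveEdges (E : Finset (V × V)) (p : V × V → ℝ) (S : Finset V)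
    (q : ℝ) : Finset (V × V) :=
  E.filter (fun e =>
    (extPi E p S e.2 < extPi E p S e.1 ∧
      ¬(extPi E p S e.1 - 1 + p e ≤ q ∧ q ≤ extPi E p S e.1)) ∨
    (extPi E p S e.1 ≤ extPi E p S e.2 ∧ 0 < q ∧ q ≤ p e))

end CorrIM

/-!
Fix a level `q ∈ (0, 1]` different from every `π*_i`. Along an edge `(k, j)` the potential drops
by at most `1 - p(k, j)` (`π*_j ≥ π*_k - 1 + p(k, j)`), so if every edge with
`q < π*_k - 1 + p(k, j)` is live, a path from `S` of weight `L(γ) > q` is live along its whole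
length; if moreover no live edge leaves `{π* ≥ q}`, nothing below level `q` is reached. In `E(q)`
the influenced set is therefore `S ∪ {i : q < π*_i}`, and integrating over `q` gives
`|S| + ∑ π*_i`. A variant of `E(q)` with the same two properties has edge marginals exactly `p`,
so its law lies in `Θ` and attains this value. Conversely, for any `θ ∈ Θ` the union bound gives
`P(all edges of γ live) ≥ L(γ)`, hence `P(i influenced) ≥ π*_i`.
-/

namespace CorrIM

open MeasureTheory

section Paths

variable {V : Type*}

def pathCost (p : V × V → ℝ) (γ : List V) : ℝ :=
  ((pathEdges γ).map (fun e => 1 - p e)).sum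

theorem L_eq_one_sub_pathCost (p : V × V → ℝ) (γ : List V) : L p γ = 1 - pathCost p γ := rfl

theorem pathEdges_cons_cons (a b : V) (t : List V) :
    pathEdges (a :: b :: t) = (a, b) :: pathEdges (b :: t) := rfl

theorem pathCost_cons_cons (p : V × V → ℝ) (a b : V) (t : List V) :
    pathCost p (a :: b :: t) = (1 - p (a, b)) + pathCost p (b :: t) := by
  simp [pathCost, pathEdges_cons_cons]

theorem isChain_iff_forall_mem_pathEdges {r : V → V → Prop} :
    ∀ {γ : List V}, γ.IsChain r ↔ ∀ e ∈ pathEdges γ, r e.1 e.2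
  | [] => by simp [pathEdges]
  | [a] => by simp [pathEdges]
  | a :: b :: t => by
    rw [List.isChain_cons_cons, isChain_iff_forall_mem_pathEdges, pathEdges_cons_cons,
      List.forall_mem_cons]

theorem pathEdges_append_singleton : ∀ {γ : List V} {k : V} (j : V), γ.getLast? = some k →
    pathEdges (γ ++ [j]) = pathEdges γ ++ [(k, j)]
  | [], _, _, h => by simp at h
  | [a], _, _, h => by cases Option.some_injective _ h; rfl
  | a :: b :: t, k, j, h => by
    rw [List.getLast?_cons_cons] at h
    simp only [List.cons_append, pathEdges_cons_cons] at *
    rw [← List.cons_append, pathEdges_append_singleton j h]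

theorem pathCost_append_singleton (p : V × V → ℝ) {γ : List V} {k : V} (j : V)
    (h : γ.getLast? = some k) : pathCost p (γ ++ [j]) = pathCost p γ + (1 - p (k, j)) := by
  simp [pathCost, pathEdges_append_singleton j h]

theorem pathCost_nonneg {E : Finset (V × V)} {p : V × V → ℝ} (hp : ∀ e ∈ E, p e ≤ 1)
    {γ : List V} (hγ : γ.IsChain (fun a b => (a, b) ∈ E)) : 0 ≤ pathCost p γ :=
  List.sum_nonneg <| by
    simp only [List.mem_map]
    rintro _ ⟨e, he, rfl⟩
    linarith [hp e (isChain_iff_forall_mem_pathEdges.1 hγ e he)]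

theorem reflTransGen_of_isChain {r : V → V → Prop} {γ : List V} {a b : V} (hγ : γ.IsChain r)
    (ha : γ.head? = some a) (hb : γ.getLast? = some b) : Relation.ReflTransGen r a b := by
  obtain ⟨l, rfl⟩ := List.head?_eq_some_iff.1 ha
  exact List.relationReflTransGen_of_exists_isChain_cons l hγ
    (Option.some_injective _ ((List.getLast?_eq_some_getLast _).symm.trans hb))

theorem IsPathFrom.append_singleton {E : Finset (V × V)} {S : Finset V} {k j : V}
    {γ : List V} (h : IsPathFrom E S k γ) (he : (k, j) ∈ E) : IsPathFrom E S j (γ ++ [j]) := by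
  obtain ⟨hl, ⟨s, hs, hhead⟩, hlast, hchain⟩ := h
  refine ⟨by simp; omega, ⟨s, hs, ?_⟩, List.getLast?_concat, ?_⟩
  · rwa [List.head?_append_of_ne_nil _ (List.ne_nil_of_length_pos (by omega))]
  · refine List.isChain_append.2 ⟨hchain, List.isChain_singleton _, ?_⟩
    simp_all

theorem isPathFrom_pair {E : Finset (V × V)} {S : Finset V} {k j : V} (hk : k ∈ S)
    (he : (k, j) ∈ E) : IsPathFrom E S j [k, j] :=
  ⟨le_rfl, ⟨k, hk, rfl⟩, rfl, List.isChain_pair.2 he⟩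

end Paths

section Potential

variable {V : Type*} {E : Finset (V × V)} {p : V × V → ℝ} {S : Finset V} {i : V}

theorem bddAbove_pathWeights (hp : ∀ e ∈ E, p e ≤ 1) (i : V) :
    BddAbove (insert 0 {x : ℝ | ∃ γ : List V, IsPathFrom E S i γ ∧ x = L p γ}) := by
  refine ⟨1, ?_⟩
  rintro _ (rfl | ⟨γ, hγ, rfl⟩)
  · exact zero_le_one
  · linarith [pathCost_nonneg hp hγ.2.2.2, L_eq_one_sub_pathCost p γ]

theorem L_le_piStar (hp : ∀ e ∈ E, p e ≤ 1) {γ : List V} (hγ : IsPathFrom E S i γ) :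
    L p γ ≤ piStar E p S i :=
  le_csSup (bddAbove_pathWeights hp i) (Set.mem_insert_of_mem _ ⟨γ, hγ, rfl⟩)

theorem piStar_nonneg (hp : ∀ e ∈ E, p e ≤ 1) (i : V) : 0 ≤ piStar E p S i :=
  le_csSup (bddAbove_pathWeights hp i) (Set.mem_insert _ _)

theorem piStar_le {x : ℝ} (hx : 0 ≤ x) (h : ∀ γ, IsPathFrom E S i γ → L p γ ≤ x) :
    piStar E p S i ≤ x :=
  csSup_le ⟨0, Set.mem_insert _ _⟩ <| by
    rintro _ (rfl | ⟨γ, hγ, rfl⟩)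
    exacts [hx, h γ hγ]

theorem piStar_le_one (hp : ∀ e ∈ E, p e ≤ 1) (i : V) : piStar E p S i ≤ 1 :=
  piStar_le zero_le_one fun γ hγ => by
    linarith [pathCost_nonneg hp hγ.2.2.2, L_eq_one_sub_pathCost p γ]

theorem exists_isPathFrom_lt_L {x : ℝ} (hx : 0 ≤ x) (h : x < piStar E p S i) :
    ∃ γ, IsPathFrom E S i γ ∧ x < L p γ := by
  obtain ⟨_, hy | ⟨γ, hγ, rfl⟩, hxy⟩ := exists_lt_of_lt_csSup ⟨0, Set.mem_insert _ _⟩ h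
  · exact absurd (hy ▸ hxy) hx.not_gt
  · exact ⟨γ, hγ, hxy⟩

variable [DecidableEq V]

theorem extPi_of_mem (hi : i ∈ S) : extPi E p S i = 1 := if_pos hi

theorem extPi_of_notMem (hi : i ∉ S) : extPi E p S i = piStar E p S i := if_neg hi

theorem extPi_le_one (hp : ∀ e ∈ E, p e ≤ 1) (i : V) : extPi E p S i ≤ 1 := by
  unfold extPi
  split_ifs
  exacts [le_rfl, piStar_le_one hp i]

theorem piStar_le_extPi (hp : ∀ e ∈ E, p e ≤ 1) (i : V) : piStar E p S i ≤ extPi E p S i := by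
  unfold extPi
  split_ifs
  exacts [piStar_le_one hp i, le_rfl]

/-- The Bellman inequality of the longest-path problem that defines `π*`. -/
theorem extPi_sub_one_add_le_piStar (hp : ∀ e ∈ E, p e ≤ 1) {k j : V} (he : (k, j) ∈ E) :
    extPi E p S k - 1 + p (k, j) ≤ piStar E p S j := by
  by_cases hk : k ∈ S
  · have := L_le_piStar hp (isPathFrom_pair hk he)
    simp_all [L, pathEdges, extPi_of_mem hk]
  · rw [extPi_of_notMem hk, sub_add, sub_le_iff_le_add]
    refine piStar_le (by linarith [piStar_nonneg (S := S) hp j, hp _ he]) fun γ hγ => ?_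
    have := L_le_piStar hp (hγ.append_singleton he)
    rw [L_eq_one_sub_pathCost, pathCost_append_singleton p j hγ.2.2.1] at this
    rw [L_eq_one_sub_pathCost]
    linarith

end Potential

section LevelScenario

variable {V : Type*} [DecidableEq V] {E : Finset (V × V)} {p : V × V → ℝ} {S : Finset V}
  {q : ℝ} {w : Finset (V × V)}

structure IsLevelScenario (E : Finset (V × V)) (p : V × V → ℝ) (S : Finset V) (q : ℝ)
    (w : Finset (V × V)) : Prop where
  mem_of_lt : ∀ e ∈ E, q < extPi E p S e.1 - 1 + p e → e ∈ w
  le_extPi_snd : ∀ e ∈ w, q ≤ extPi E p S e.1 → q ≤ extPi E p S e.2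

theorem influenced_of_isChain (hp : ∀ e ∈ E, p e ≤ 1) (hw : IsLevelScenario E p S q w) :
    ∀ {γ : List V} {k i : V}, γ.IsChain (fun a b => (a, b) ∈ E) → γ.head? = some k →
      γ.getLast? = some i → influenced w S k → q < extPi E p S k - pathCost p γ →
      influenced w S i
  | [], _, _, _, hk, _, _, _ => by simp at hk
  | [_], _, _, _, hk, hi, hinf, _ => by simp_all
  | a :: b :: t, k, i, hγ, hk, hi, hinf, hq => by
    cases Option.some_injective _ hk
    obtain ⟨hab, hγ⟩ := List.isChain_cons_cons.1 hγ
    rw [pathCost_cons_cons] at hq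
    have hslack := extPi_sub_one_add_le_piStar (S := S) hp hab
    have hb : influenced w S b :=
      let ⟨s, hs, hsa⟩ := hinf
      ⟨s, hs, hsa.tail (hw.mem_of_lt _ hab (by linarith [pathCost_nonneg hp hγ]))⟩
    refine influenced_of_isChain hp hw hγ rfl (by rwa [List.getLast?_cons_cons] at hi) hb ?_
    linarith [piStar_le_extPi (S := S) hp b]

theorem influenced_of_lt_piStar (hp : ∀ e ∈ E, p e ≤ 1) (hw : IsLevelScenario E p S q w)
    (hq : 0 ≤ q) {i : V} (hi : q < piStar E p S i) : influenced w S i := by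
  obtain ⟨γ, ⟨-, ⟨s, hs, hhead⟩, hlast, hγ⟩, hL⟩ := exists_isPathFrom_lt_L hq hi
  refine influenced_of_isChain hp hw hγ hhead hlast ⟨s, hs, .refl⟩ ?_
  rwa [extPi_of_mem hs, ← L_eq_one_sub_pathCost]

theorem le_extPi_of_influenced (hw : IsLevelScenario E p S q w) (hq : q ≤ 1) {i : V}
    (hi : influenced w S i) : q ≤ extPi E p S i := by
  obtain ⟨s, hs, hsi⟩ := hi
  induction hsi with
  | refl => rwa [extPi_of_mem hs]
  | tail _ hbc ih => exact hw.le_extPi_snd _ hbc ih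

theorem influenced_iff_lt_piStar (hp : ∀ e ∈ E, p e ≤ 1) (hw : IsLevelScenario E p S q w)
    (hq₀ : 0 ≤ q) (hq₁ : q ≤ 1) {i : V} (hiS : i ∉ S) (hqi : q ≠ piStar E p S i) :
    influenced w S i ↔ q < piStar E p S i :=
  ⟨fun h => (extPi_of_notMem hiS ▸ le_extPi_of_influenced hw hq₁ h).lt_of_ne hqi,
    influenced_of_lt_piStar hp hw hq₀⟩

theorem isLevelScenario_liveEdges (hp : ∀ e ∈ E, p e ≤ 1) (hq : 0 < q) :
    IsLevelScenario E p S q (liveEdges E p S q) where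
  mem_of_lt e he hqe := by
    refine Finset.mem_filter.2 ⟨he, ?_⟩
    rcases lt_or_ge (extPi E p S e.2) (extPi E p S e.1) with h | h
    · exact .inl ⟨h, fun hc => hc.1.not_gt hqe⟩
    · exact .inr ⟨h, hq, by linarith [extPi_le_one (S := S) hp e.1]⟩
  le_extPi_snd e he hqe := by
    obtain ⟨he, ⟨-, hlive⟩ | ⟨h, -⟩⟩ := Finset.mem_filter.1 he
    · have hslack := extPi_sub_one_add_le_piStar (S := S) hp he
      have := piStar_le_extPi (S := S) hp e.2
      exact le_of_not_gt fun hlt => hlive ⟨by linarith, hqe⟩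
    · exact hqe.trans h

end LevelScenario

section MarginalScenario

variable {V : Type*} [DecidableEq V] {E : Finset (V × V)} {p : V × V → ℝ} {S : Finset V}

noncomputable def blockStart (E : Finset (V × V)) (p : V × V → ℝ) (S : Finset V)
    (e : V × V) : ℝ :=
  max 0 (extPi E p S e.1 - 1 + p e)

open Classical in
/-- A variant of `E(q)` whose dead intervals have length exactly `1 - p e` inside `[0, 1]`,
so that its law under uniform `q` has marginals `p`; `E(q)` itself overshoots `p` on edges
with `π*_k < 1 - p(k, j)`. -/
noncomputable def marginalLiveEdges (E : Finset (V × V)) (p : V × V → ℝ) (S : Finset V)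
    (q : ℝ) : Finset (V × V) :=
  E.filter fun e => q ∉ Set.Icc (blockStart E p S e) (blockStart E p S e + (1 - p e))

theorem setOf_mem_marginalLiveEdges {e : V × V} (he : e ∈ E) :
    {q | e ∈ marginalLiveEdges E p S q} =
      (Set.Icc (blockStart E p S e) (blockStart E p S e + (1 - p e)))ᶜ := by
  ext q
  simp [marginalLiveEdges, he]

theorem isLevelScenario_marginalLiveEdges (hp : ∀ e ∈ E, p e ≤ 1) {q : ℝ} (hq : 0 ≤ q) :
    IsLevelScenario E p S q (marginalLiveEdges E p S q) where
  mem_of_lt e he hqe := Finset.mem_filter.2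
    ⟨he, fun hc => lt_irrefl q (hqe.trans_le ((le_max_right _ _).trans hc.1))⟩
  le_extPi_snd := by
    rintro ⟨k, j⟩ he hqe
    obtain ⟨he, hlive⟩ := Finset.mem_filter.1 he
    have hslack := extPi_sub_one_add_le_piStar (S := S) hp he
    have := piStar_le_extPi (S := S) hp j
    have hb : extPi E p S k - 1 + p (k, j) ≤ blockStart E p S (k, j) := le_max_right _ _
    have hqb : q < blockStart E p S (k, j) :=
      not_le.1 fun h => hlive ⟨h, by dsimp only at hqe; linarith⟩
    rcases lt_max_iff.1 hqb with h | h
    · linarith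
    · dsimp only; linarith

theorem measurableSet_setOf_mem_marginalLiveEdges (e : V × V) :
    MeasurableSet {q | e ∈ marginalLiveEdges E p S q} := by
  by_cases he : e ∈ E
  · rw [setOf_mem_marginalLiveEdges he]
    exact measurableSet_Icc.compl
  · simp [marginalLiveEdges, he]

end MarginalScenario

theorem setIntegral_Ioc_zero_one_indicator_Iio {a : ℝ} (h₀ : 0 ≤ a) (h₁ : a ≤ 1) :
    ∫ q in Set.Ioc 0 1, (Set.Iio a).indicator 1 q = a := by
  have : Set.Iio a ∩ Set.Ioc 0 1 = Set.Ioo 0 a := by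
    ext x
    simp only [Set.mem_inter_iff, Set.mem_Iio, Set.mem_Ioc, Set.mem_Ioo]
    exact ⟨fun ⟨hxa, hx0, _⟩ => ⟨hx0, hxa⟩, fun ⟨hx0, hxa⟩ => ⟨hxa, hx0, by linarith⟩⟩
  rw [integral_indicator_one measurableSet_Iio, measureReal_restrict_apply measurableSet_Iio,
    this, Real.volume_real_Ioo_of_le h₀, sub_zero]

open Classical in
theorem cast_R_eq_sum {V : Type*} [Fintype V] (w : Finset (V × V)) (S : Finset V) :
    (R w S : ℝ) = ∑ i, if influenced w S i then 1 else 0 := by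
  rw [Finset.sum_boole, R, ← Set.ncard_coe_finset]
  congr
  ext
  simp

section InfluenceCount

variable {V : Type*} [Fintype V] [DecidableEq V] {E : Finset (V × V)} {p : V × V → ℝ}
  {S : Finset V}

theorem R_eq_card_add_sum_indicator (hp : ∀ e ∈ E, p e ≤ 1) {q : ℝ} {w : Finset (V × V)}
    (hw : IsLevelScenario E p S q w) (hq₀ : 0 ≤ q) (hq₁ : q ≤ 1)
    (hq : ∀ i, q ≠ piStar E p S i) :
    (R w S : ℝ) = S.card + ∑ i ∈ Finset.univ \ S, (Set.Iio (piStar E p S i)).indicator 1 q := by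
  classical
  rw [cast_R_eq_sum, ← Finset.sum_sdiff (Finset.subset_univ S), add_comm,
    Finset.sum_congr rfl (g := fun _ => (1 : ℝ)) fun i hi => if_pos ⟨i, hi, .refl⟩,
    Finset.sum_const, nsmul_one]
  congr 1
  refine Finset.sum_congr rfl fun i hi => ?_
  rw [influenced_iff_lt_piStar hp hw hq₀ hq₁ (Finset.mem_sdiff.1 hi).2 (hq i)]
  simp [Set.indicator_apply]

theorem integral_R_of_isLevelScenario (hp : ∀ e ∈ E, p e ≤ 1) {w : ℝ → Finset (V × V)}
    (hw : ∀ q ∈ Set.Ioc 0 1, IsLevelScenario E p S q (w q)) :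
    ∫ q in Set.Ioc 0 1, (R (w q) S : ℝ) = S.card + ∑ i ∈ Finset.univ \ S, piStar E p S i := by
  have hae : ∀ᵐ q ∂volume.restrict (Set.Ioc (0 : ℝ) 1), (R (w q) S : ℝ) =
      S.card + ∑ i ∈ Finset.univ \ S, (Set.Iio (piStar E p S i)).indicator 1 q := by
    have hnull : ∀ᵐ q ∂volume.restrict (Set.Ioc (0 : ℝ) 1), q ∉ Set.range (piStar E p S) :=
      ae_restrict_of_ae <| measure_eq_zero_iff_ae_notMem.1 <|
        (Set.finite_range _).measure_zero volume
    filter_upwards [hnull, ae_restrict_mem measurableSet_Ioc] with q hq hq01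
    exact R_eq_card_add_sum_indicator hp (hw q hq01) hq01.1.le hq01.2 fun i h => hq ⟨i, h.symm⟩
  have hint : ∀ i ∈ Finset.univ \ S, Integrable ((Set.Iio (piStar E p S i)).indicator 1)
      (volume.restrict (Set.Ioc (0 : ℝ) 1)) :=
    fun i _ => (integrable_const (1 : ℝ)).indicator measurableSet_Iio
  rw [integral_congr_ae hae, integral_add (integrable_const _) (integrable_finsetSum _ hint),
    integral_finsetSum _ hint]
  simp [setIntegral_Ioc_zero_one_indicator_Iio (piStar_nonneg hp _) (piStar_le_one hp _)]

end InfluenceCount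

section UniformPushforward

variable {α : Type*} {w : ℝ → α}

noncomputable def uniformPushforward (w : ℝ → α) (a : α) : ℝ :=
  volume.real (Set.Ioc 0 1 ∩ w ⁻¹' {a})

theorem uniformPushforward_nonneg (w : ℝ → α) (a : α) : 0 ≤ uniformPushforward w a :=
  measureReal_nonneg

theorem exists_eq_of_uniformPushforward_ne_zero {a : α} (ha : uniformPushforward w a ≠ 0) :
    ∃ q, w q = a := by
  obtain ⟨q, -, hq⟩ := nonempty_of_measureReal_ne_zero ha
  exact ⟨q, hq⟩

variable [Fintype α]

theorem sum_uniformPushforward_mul (hw : ∀ a, MeasurableSet (w ⁻¹' {a})) (F : α → ℝ) :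
    ∑ a, uniformPushforward w a * F a = ∫ q in Set.Ioc 0 1, F (w q) := by
  have hF : ∀ q, F (w q) = ∑ a, (w ⁻¹' {a}).indicator (fun _ => F a) q := fun q => by
    classical
    simp [Set.indicator_apply]
  simp_rw [hF]
  rw [integral_finsetSum _ fun a _ => (integrable_const _).indicator (hw a)]
  refine Finset.sum_congr rfl fun a _ => ?_
  rw [integral_indicator (hw a), Measure.restrict_restrict (hw a), setIntegral_const,
    smul_eq_mul, uniformPushforward, Set.inter_comm]

theorem sum_uniformPushforward (hw : ∀ a, MeasurableSet (w ⁻¹' {a})) :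
    ∑ a, uniformPushforward w a = 1 := by
  simpa using sum_uniformPushforward_mul hw 1

theorem sum_ite_uniformPushforward (hw : ∀ a, MeasurableSet (w ⁻¹' {a})) (P : α → Prop)
    [DecidablePred P] :
    ∑ a, (if P a then uniformPushforward w a else 0) =
      volume.real (Set.Ioc 0 1 ∩ {q | P (w q)}) := by
  have hP : MeasurableSet {q | P (w q)} := by
    rw [show {q | P (w q)} = ⋃ a ∈ {a | P a}, w ⁻¹' {a} by ext; simp]
    exact .biUnion (Set.to_countable _) fun a _ => hw a
  have hind : (fun q => if P (w q) then (1 : ℝ) else 0) = {q | P (w q)}.indicator 1 := by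
    funext q
    simp only [Set.indicator_apply, Set.mem_ofPred_eq, Pi.one_apply]
  simpa [hind, integral_indicator_one hP, measureReal_restrict_apply hP, Set.inter_comm] using
    sum_uniformPushforward_mul hw fun a => if P a then 1 else 0

end UniformPushforward

theorem measurableSet_preimage_singleton_of_measurableSet_mem {Ω β : Type*} [MeasurableSpace Ω]
    [Finite β] {w : Ω → Finset β} (hw : ∀ b, MeasurableSet {x | b ∈ w x}) (c : Finset β) :
    MeasurableSet (w ⁻¹' {c}) := by
  have : w ⁻¹' {c} = ⋂ b, {x | b ∈ w x ↔ b ∈ c} := by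
    ext
    simp [Finset.ext_iff]
  rw [this]
  refine .iInter fun b => ?_
  by_cases hb : b ∈ c
  · simpa only [hb, iff_true] using hw b
  · simp only [hb, iff_false]
    exact (hw b).compl

theorem volume_real_Ioc_zero_one_inter_compl_Icc {a b : ℝ} (ha : 0 ≤ a) (hab : a ≤ b)
    (hb : b ≤ 1) : volume.real (Set.Ioc 0 1 ∩ (Set.Icc a b)ᶜ) = 1 - (b - a) := by
  have hblock : volume.real (Set.Ioc 0 1 ∩ Set.Icc a b) = b - a := by
    rw [measureReal_congr ((ae_eq_refl _).inter Ioc_ae_eq_Icc).symm, Set.Ioc_inter_Ioc,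
      max_eq_right ha, min_eq_right hb, Real.volume_real_Ioc_of_le hab]
  have := measureReal_inter_add_sdiff (μ := volume) (s := Set.Ioc (0 : ℝ) 1)
    (measurableSet_Icc (a := a) (b := b)) measure_Ioc_lt_top.ne
  rw [Real.volume_real_Ioc_of_le zero_le_one, hblock] at this
  rw [← Set.sdiff_eq]
  linarith

section MarginalLaw

variable {V : Type*} [Fintype V] [DecidableEq V] {E : Finset (V × V)} {p : V × V → ℝ}
  {S : Finset V}

theorem memTheta_uniformPushforward_marginalLiveEdges (hp : ∀ e ∈ E, 0 ≤ p e ∧ p e ≤ 1) :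
    memTheta E p (uniformPushforward (marginalLiveEdges E p S)) := by
  have hw := measurableSet_preimage_singleton_of_measurableSet_mem
    (measurableSet_setOf_mem_marginalLiveEdges (E := E) (p := p) (S := S))
  refine ⟨uniformPushforward_nonneg _, fun c hc => ?_, sum_uniformPushforward hw,
    fun e he => ?_⟩
  · obtain ⟨q, rfl⟩ := exists_eq_of_uniformPushforward_ne_zero hc
    exact Finset.filter_subset _ _
  · classical
    have hb : blockStart E p S e ≤ p e :=
      max_le (hp e he).1 (by linarith [extPi_le_one (S := S) (fun e he => (hp e he).2) e.1])
    rw [sum_ite_uniformPushforward hw, setOf_mem_marginalLiveEdges he,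
      volume_real_Ioc_zero_one_inter_compl_Icc (a := blockStart E p S e)
        (b := blockStart E p S e + (1 - p e)) (le_max_left _ _) (by linarith [(hp e he).2])
        (by linarith)]
    ring

end MarginalLaw

section LowerBound

variable {V : Type*} [Fintype V] {θ : Finset (V × V) → ℝ}

theorem prob_mono (hθ : ∀ c, 0 ≤ θ c) {A B : Finset (V × V) → Prop} (h : ∀ c, A c → B c) :
    prob θ A ≤ prob θ B :=
  Finset.sum_le_sum fun c _ => by
    split_ifs with hA hB
    exacts [le_rfl, absurd (h c hA) hB, hθ c, le_rfl]

theorem prob_le_prob_and_add_prob_not (hθ : ∀ c, 0 ≤ θ c) (A B : Finset (V × V) → Prop) :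
    prob θ A ≤ prob θ (fun c => A c ∧ B c) + prob θ (fun c => ¬B c) := by
  unfold prob
  rw [← Finset.sum_add_distrib]
  refine Finset.sum_le_sum fun c _ => ?_
  split_ifs <;> simp_all [hθ c]

theorem expInf_eq_sum_prob (θ : Finset (V × V) → ℝ) (S : Finset V) :
    expInf θ S = ∑ i, prob θ (fun c => influenced c S i) := by
  classical
  simp only [expInf, prob, cast_R_eq_sum, Finset.mul_sum, mul_ite, mul_one, mul_zero]
  exact Finset.sum_comm

variable [DecidableEq V] {E : Finset (V × V)} {p : V × V → ℝ} {S : Finset V}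

theorem prob_eq_one_of_forall (hθ : memTheta E p θ) {A : Finset (V × V) → Prop}
    (hA : ∀ c, A c) : prob θ A = 1 := by
  simp only [prob, hA, if_true]
  exact hθ.2.2.1

theorem prob_notMem_of_memTheta (hθ : memTheta E p θ) {e : V × V} (he : e ∈ E) :
    prob θ (fun c => e ∉ c) = 1 - p e := by
  rw [← hθ.2.2.2 e he, ← hθ.2.2.1, eq_sub_iff_add_eq, prob, ← Finset.sum_add_distrib]
  refine Finset.sum_congr rfl fun c _ => ?_
  split_ifs <;> simp_all

/-- The union bound over the edges of `l`. -/
theorem one_sub_sum_le_prob_forall_mem (hθ : memTheta E p θ) :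
    ∀ {l : List (V × V)}, (∀ e ∈ l, e ∈ E) →
      1 - (l.map fun e => 1 - p e).sum ≤ prob θ (fun c => ∀ e ∈ l, e ∈ c)
  | [], _ => by simp [prob_eq_one_of_forall hθ]
  | e :: l, hl => by
    have ih := one_sub_sum_le_prob_forall_mem hθ fun x hx => hl x (List.mem_cons_of_mem _ hx)
    have hsplit := prob_le_prob_and_add_prob_not hθ.1 (fun c => ∀ x ∈ l, x ∈ c) (fun c => e ∈ c)
    rw [prob_notMem_of_memTheta hθ (hl e List.mem_cons_self)] at hsplit
    have hcons : prob θ (fun c => (∀ x ∈ l, x ∈ c) ∧ e ∈ c) =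
        prob θ (fun c => ∀ x ∈ e :: l, x ∈ c) := by
      simp only [List.forall_mem_cons, and_comm]
    rw [List.map_cons, List.sum_cons]
    linarith

theorem piStar_le_prob_influenced (hθ : memTheta E p θ) (i : V) :
    piStar E p S i ≤ prob θ (fun c => influenced c S i) := by
  refine piStar_le (Finset.sum_nonneg fun c _ => by split_ifs <;> simp [hθ.1 c]) ?_
  rintro γ ⟨-, ⟨s, hs, hhead⟩, hlast, hγ⟩
  have hedges := isChain_iff_forall_mem_pathEdges.1 hγ
  calc L p γ ≤ prob θ (fun c => ∀ e ∈ pathEdges γ, e ∈ c) :=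
        one_sub_sum_le_prob_forall_mem hθ fun e he => hedges e he
    _ ≤ prob θ (fun c => influenced c S i) := prob_mono hθ.1 fun c hc =>
        ⟨s, hs, reflTransGen_of_isChain (isChain_iff_forall_mem_pathEdges.2 hc) hhead hlast⟩

theorem card_add_sum_piStar_le_expInf (hθ : memTheta E p θ) :
    S.card + ∑ i ∈ Finset.univ \ S, piStar E p S i ≤ expInf θ S := by
  rw [expInf_eq_sum_prob, ← Finset.sum_sdiff (Finset.subset_univ S), add_comm]
  refine add_le_add (Finset.sum_le_sum fun i _ => piStar_le_prob_influenced hθ i) ?_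
  rw [Finset.sum_congr rfl fun i hi => prob_eq_one_of_forall hθ fun c => ⟨i, hi, .refl⟩]
  simp

end LowerBound

theorem fcorr_eq_card_add_sum_piStar {V : Type*} [Fintype V] [DecidableEq V]
    {E : Finset (V × V)} {p : V × V → ℝ} (hp : ∀ e ∈ E, 0 ≤ p e ∧ p e ≤ 1) (S : Finset V) :
    fcorr E p S = S.card + ∑ i ∈ Finset.univ \ S, piStar E p S i := by
  have hp₁ : ∀ e ∈ E, p e ≤ 1 := fun e he => (hp e he).2
  have hw := measurableSet_preimage_singleton_of_measurableSet_mem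
    (measurableSet_setOf_mem_marginalLiveEdges (E := E) (p := p) (S := S))
  refine IsLeast.csInf_eq
    ⟨⟨_, memTheta_uniformPushforward_marginalLiveEdges (S := S) hp, Eq.symm ?_⟩, ?_⟩
  · rw [expInf, sum_uniformPushforward_mul hw, integral_R_of_isLevelScenario hp₁ fun q hq =>
      isLevelScenario_marginalLiveEdges hp₁ hq.1.le]
  · rintro _ ⟨θ, hθ, rfl⟩
    exact card_add_sum_piStar_le_expInf hθ

variable {V : Type*} [Fintype V] [DecidableEq V]

/-- with `q̃` uniform on `[0,1]`, the expected number of influenced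
nodes of the random scenario `E(q̃)` equals the worst-case expected influence:
`∫_0^1 R(E(q), S) dq = |S| + ∑_{i ∈ V \ S} π*_i = f^corr(S)`. -/
theorem integral_influence_eq_fcorr (E : Finset (V × V)) (p : V × V → ℝ)
    (hp : ∀ e ∈ E, 0 ≤ p e ∧ p e ≤ 1) (S : Finset V) :
    (∫ q in (0:ℝ)..1, (R (liveEdges E p S q) S : ℝ)) =
        (S.card : ℝ) + ∑ i ∈ Finset.univ \ S, piStar E p S i ∧
      (∫ q in (0:ℝ)..1, (R (liveEdges E p S q) S : ℝ)) = fcorr E p S := by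
  have hp₁ : ∀ e ∈ E, p e ≤ 1 := fun e he => (hp e he).2
  have hE : (∫ q in (0:ℝ)..1, (R (liveEdges E p S q) S : ℝ)) =
      S.card + ∑ i ∈ Finset.univ \ S, piStar E p S i := by
    rw [intervalIntegral.integral_of_le zero_le_one]
    exact integral_R_of_isLevelScenario hp₁ fun q hq => isLevelScenario_liveEdges hp₁ hq.1
  exact ⟨hE, hE.trans (fcorr_eq_card_add_sum_piStar hp S).symm⟩

end CorrIM
end

section
/- There exists a constant C > 0 such that for infinitely many positive integers n there exist a directed graph G = (V, E) with |V| = n nodes and edge likelihoods p : E → [0,1] with the following property: for every singleton seed set S_ic maximizing f^ic(S) over all S ⊆ V with |S| ≤ 1, one has f^corr(S_ic) ≤ (C/n) · max_{S ⊆ V, |S| ≤ 1} f^corr(S); that is, the price of correlations with budget k = 1 is O(1/n). -/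
open scoped BigOperators

namespace CorrIM

variable {V : Type*} [Fintype V] [DecidableEq V]

/-! ### General auxiliary lemmas -/

/-- Cylinder probabilities of the independent distribution. -/
lemma cyl (E F : Finset (V × V)) (p : V × V → ℝ) (hF : F ⊆ E) :
    (∑ c : Finset (V × V), if F ⊆ c then thetaIC E p c else 0) = ∏ e ∈ F, p e := by
  classical
  have h1 : (∑ c : Finset (V × V), if F ⊆ c then thetaIC E p c else 0)
      = ∑ c ∈ E.powerset, if F ⊆ c then thetaIC E p c else 0 := by
    refine (Finset.sum_subset (Finset.subset_univ _) ?_).symm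
    intro c _ hc
    have hcE : ¬ c ⊆ E := by simpa using hc
    simp [thetaIC, hcE]
  rw [h1, ← Finset.sum_filter]
  have h3 : ∑ c ∈ E.powerset.filter (fun c => F ⊆ c), thetaIC E p c
      = ∑ d ∈ (E \ F).powerset,
          (∏ e ∈ F, p e) * ((∏ e ∈ d, p e) * ∏ e ∈ (E \ F) \ d, (1 - p e)) := by
    refine Finset.sum_nbij' (fun c => c \ F) (fun d => F ∪ d) ?_ ?_ ?_ ?_ ?_
    · intro c hc
      rw [Finset.mem_filter, Finset.mem_powerset] at hc
      exact Finset.mem_powerset.2 (Finset.sdiff_subset_sdiff hc.1 (Finset.Subset.refl F))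
    · intro d hd
      rw [Finset.mem_powerset] at hd
      rw [Finset.mem_filter, Finset.mem_powerset]
      exact ⟨Finset.union_subset hF (hd.trans (Finset.sdiff_subset)), Finset.subset_union_left⟩
    · intro c hc
      rw [Finset.mem_filter] at hc
      exact Finset.union_sdiff_of_subset hc.2
    · intro d hd
      rw [Finset.mem_powerset] at hd
      have hdisj : Disjoint F d :=
        (Finset.disjoint_of_subset_left hd Finset.sdiff_disjoint).symm
      exact Finset.union_sdiff_cancel_left hdisj
    · intro c hc
      rw [Finset.mem_filter, Finset.mem_powerset] at hc
      obtain ⟨hcE, hFc⟩ := hc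
      have hθ : thetaIC E p c = (∏ e ∈ c, p e) * ∏ e ∈ E \ c, (1 - p e) := by
        rw [thetaIC, if_pos hcE]
      have hcu : c = F ∪ (c \ F) := (Finset.union_sdiff_of_subset hFc).symm
      have hprod : ∏ e ∈ c, p e = (∏ e ∈ F, p e) * ∏ e ∈ c \ F, p e := by
        conv_lhs => rw [hcu]
        exact Finset.prod_union Finset.disjoint_sdiff
      have hsd : E \ c = (E \ F) \ (c \ F) := by
        ext a
        simp only [Finset.mem_sdiff]
        have := @hFc a
        tauto
      rw [hθ, hprod, hsd]
      ring
  rw [h3, ← Finset.mul_sum]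
  have h4 : ∑ d ∈ (E \ F).powerset, (∏ e ∈ d, p e) * ∏ e ∈ (E \ F) \ d, (1 - p e)
      = ∏ e ∈ (E \ F), (p e + (1 - p e)) := (Finset.prod_add p (fun e => 1 - p e) (E \ F)).symm
  rw [h4, Finset.prod_congr rfl (fun e _ => by ring : ∀ e ∈ E \ F, p e + (1 - p e) = 1),
    Finset.prod_const_one, mul_one]

lemma thetaIC_nonneg (E : Finset (V × V)) (p : V × V → ℝ)
    (h0 : ∀ e, 0 ≤ p e) (h1 : ∀ e, p e ≤ 1) (c : Finset (V × V)) :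
    0 ≤ thetaIC E p c := by
  rw [thetaIC]
  split
  · exact mul_nonneg (Finset.prod_nonneg fun e _ => h0 e)
      (Finset.prod_nonneg fun e _ => by linarith [h1 e])
  · exact le_refl 0

lemma thetaIC_support (E : Finset (V × V)) (p : V × V → ℝ) (c : Finset (V × V))
    (h : thetaIC E p c ≠ 0) : c ⊆ E := by
  by_contra hc
  exact h (by simp [thetaIC, hc])

lemma memTheta_thetaIC (E : Finset (V × V)) (p : V × V → ℝ)
    (h0 : ∀ e, 0 ≤ p e) (h1 : ∀ e, p e ≤ 1) :
    memTheta E p (thetaIC E p) := by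
  refine ⟨thetaIC_nonneg E p h0 h1, thetaIC_support E p, ?_, ?_⟩
  · have := cyl E ∅ p (Finset.empty_subset E)
    simpa using this
  · intro e he
    have := cyl E {e} p (by simpa using he)
    simpa [Finset.singleton_subset_iff] using this

lemma marginal_zero (E : Finset (V × V)) (p : V × V → ℝ) (θ : Finset (V × V) → ℝ)
    (hθ : memTheta E p θ) (e : V × V) (he : e ∉ E) :
    (∑ c : Finset (V × V), if e ∈ c then θ c else 0) = 0 := by
  refine Finset.sum_eq_zero fun c _ => ?_
  split
  · by_contra h
    exact he (hθ.2.1 c h ‹e ∈ c›)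
  · rfl

lemma R_empty (c : Finset (V × V)) : R c (∅ : Finset V) = 0 := by
  have h : {i : V | influenced c (∅ : Finset V) i} = ∅ := by
    ext i; simp [influenced]
  simp [R, h]

lemma expInf_empty (θ : Finset (V × V) → ℝ) : expInf θ (∅ : Finset V) = 0 := by
  unfold expInf
  simp [R_empty]

lemma expInf_nonneg (θ : Finset (V × V) → ℝ) (hθ0 : ∀ c, 0 ≤ θ c) (S : Finset V) :
    0 ≤ expInf θ S :=
  Finset.sum_nonneg fun c _ => mul_nonneg (hθ0 c) (Nat.cast_nonneg _)

lemma fcorr_le (E : Finset (V × V)) (p : V × V → ℝ) (S : Finset V)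
    (θ : Finset (V × V) → ℝ) (hθ : memTheta E p θ) : fcorr E p S ≤ expInf θ S := by
  refine csInf_le ⟨0, ?_⟩ ⟨θ, hθ, rfl⟩
  rintro x ⟨θ', hθ', rfl⟩
  exact expInf_nonneg _ hθ'.1 _

lemma le_fcorr (E : Finset (V × V)) (p : V × V → ℝ) (S : Finset V) (b : ℝ)
    (θ0 : Finset (V × V) → ℝ) (hθ0 : memTheta E p θ0)
    (h : ∀ θ, memTheta E p θ → b ≤ expInf θ S) : b ≤ fcorr E p S := by
  refine le_csInf ⟨_, θ0, hθ0, rfl⟩ ?_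
  rintro x ⟨θ, hθ, rfl⟩
  exact h θ hθ

lemma R_singleton_eq (c : Finset (V × V)) (x : V)
    (h2 : ∀ b z : V, (x, b) ∈ c → (b, z) ∉ c) (hxx : (x, x) ∉ c) :
    R c {x} = 1 + (Finset.univ.filter fun i : V => (x, i) ∈ c).card := by
  have hset : {i : V | influenced c {x} i}
      = ↑(insert x (Finset.univ.filter fun i : V => (x, i) ∈ c)) := by
    ext i
    simp only [Set.mem_setOf_eq, influenced, Finset.mem_singleton, exists_eq_left,
      Finset.coe_insert, Set.mem_insert_iff, Finset.coe_filter, Finset.mem_univ, true_and]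
    constructor
    · intro h
      rcases h.cases_head with h | ⟨b, hxb, hbi⟩
      · exact Or.inl h.symm
      · rcases hbi.cases_head with h | ⟨z, hbz, _⟩
        · exact Or.inr (h ▸ hxb)
        · exact absurd hbz (h2 b z hxb)
    · rintro (rfl | h)
      · exact Relation.ReflTransGen.refl
      · exact Relation.ReflTransGen.single h
  rw [R, hset, Set.ncard_coe_finset,
    Finset.card_insert_of_notMem (by simp [hxx]), add_comm]

lemma R_singleton_real (c : Finset (V × V)) (x : V)
    (h2 : ∀ b z : V, (x, b) ∈ c → (b, z) ∉ c) (hxx : (x, x) ∉ c) :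
    (R c {x} : ℝ) = 1 + ∑ i : V, if (x, i) ∈ c then (1 : ℝ) else 0 := by
  rw [R_singleton_eq c x h2 hxx, Finset.card_filter]
  push_cast
  rfl

lemma R_ge_of_subset (c : Finset (V × V)) (S : Finset V) (G : Finset V)
    (h : ∀ i ∈ G, influenced c S i) : (G.card : ℝ) ≤ (R c S : ℝ) := by
  have hsub : (G : Set V) ⊆ {i | influenced c S i} := by
    intro i hi
    exact h i (by simpa using hi)
  have hle := Set.ncard_le_ncard hsub (Set.toFinite _)
  rw [← Set.ncard_coe_finset G]
  exact_mod_cast hle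

lemma sum_twopoint (A B : Finset (V × V)) (hAB : A ≠ B) (g : Finset (V × V) → ℝ)
    (hg : ∀ c, c ≠ A → c ≠ B → g c = 0) :
    (∑ c : Finset (V × V), g c) = g A + g B := by
  rw [← Finset.sum_subset (Finset.subset_univ ({A, B} : Finset (Finset (V × V))))
      (fun c _ hc => by
        rw [Finset.mem_insert, Finset.mem_singleton] at hc
        push_neg at hc
        exact hg c hc.1 hc.2)]
  exact Finset.sum_pair hAB

/-! ### The construction: a two-layer diamond graph on `m + 4` nodes -/

def u0 (m : ℕ) : Fin (m + 4) := ⟨0, by omega⟩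
def v1 (m : ℕ) : Fin (m + 4) := ⟨1, by omega⟩
def v2 (m : ℕ) : Fin (m + 4) := ⟨2, by omega⟩

@[simp] lemma u0_val (m : ℕ) : ((u0 m : Fin (m + 4)) : ℕ) = 0 := rfl
@[simp] lemma v1_val (m : ℕ) : ((v1 m : Fin (m + 4)) : ℕ) = 1 := rfl
@[simp] lemma v2_val (m : ℕ) : ((v2 m : Fin (m + 4)) : ℕ) = 2 := rfl

def EE (m : ℕ) : Finset (Fin (m + 4) × Fin (m + 4)) :=
  Finset.univ.filter fun e =>
    ((e.1 : ℕ) = 0 ∧ ((e.2 : ℕ) = 1 ∨ (e.2 : ℕ) = 2)) ∨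
    (((e.1 : ℕ) = 1 ∨ (e.1 : ℕ) = 2) ∧ 3 ≤ (e.2 : ℕ))

noncomputable def pp (m : ℕ) : Fin (m + 4) × Fin (m + 4) → ℝ :=
  fun e => if (e.1 : ℕ) = 0 then 3/4 else 1/4

lemma mem_EE' (m : ℕ) (a b : Fin (m + 4)) :
    (a, b) ∈ EE m ↔
      ((a : ℕ) = 0 ∧ ((b : ℕ) = 1 ∨ (b : ℕ) = 2)) ∨
      (((a : ℕ) = 1 ∨ (a : ℕ) = 2) ∧ 3 ≤ (b : ℕ)) := by
  simp [EE]

lemma pp_eval (m : ℕ) (a b : Fin (m + 4)) :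
    pp m (a, b) = if (a : ℕ) = 0 then 3/4 else 1/4 := rfl

lemma pp_nonneg (m : ℕ) : ∀ e, 0 ≤ pp m e := by
  intro e; rw [pp]; split <;> norm_num

lemma pp_le_one (m : ℕ) : ∀ e, pp m e ≤ 1 := by
  intro e; rw [pp]; split <;> norm_num

lemma sum_fin_ge3 (m : ℕ) (x : ℝ) :
    (∑ i : Fin (m + 4), if 3 ≤ (i : ℕ) then x else 0) = (m + 1) * x := by
  rw [Fin.sum_univ_eq_sum_range (fun k => if 3 ≤ k then x else 0)]
  induction m with
  | zero => norm_num [Finset.sum_range_succ]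
  | succ k ih =>
      rw [show k + 1 + 4 = (k + 4) + 1 by ring, Finset.sum_range_succ, ih,
        if_pos (by omega : 3 ≤ k + 4)]
      push_cast
      ring

lemma sum_fin_12 (m : ℕ) (x : ℝ) :
    (∑ i : Fin (m + 4), if ((i : ℕ) = 1 ∨ (i : ℕ) = 2) then x else 0) = 2 * x := by
  rw [Fin.sum_univ_eq_sum_range (fun k => if (k = 1 ∨ k = 2) then x else 0)]
  induction m with
  | zero =>
      norm_num [Finset.sum_range_succ]
      ring
  | succ k ih =>
      rw [show k + 1 + 4 = (k + 4) + 1 by ring, Finset.sum_range_succ, ih,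
        if_neg (by omega : ¬(k + 4 = 1 ∨ k + 4 = 2))]
      ring

lemma card_leaves (m : ℕ) :
    ((Finset.univ.filter fun l : Fin (m + 4) => 3 ≤ (l : ℕ)).card : ℝ) = m + 1 := by
  rw [Finset.card_filter]
  push_cast
  exact sum_fin_ge3 m 1 |>.trans (by ring)

lemma h2_of_subset (m : ℕ) (c : Finset (Fin (m + 4) × Fin (m + 4))) (hc : c ⊆ EE m)
    (x : Fin (m + 4)) (hx : (x : ℕ) ≠ 0) :
    ∀ b z : Fin (m + 4), (x, b) ∈ c → (b, z) ∉ c := by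
  intro b z hb hz
  have h1 := (mem_EE' m x b).1 (hc hb)
  have h2 := (mem_EE' m b z).1 (hc hz)
  omega

lemma expInf_singleton (m : ℕ) (θ : Finset (Fin (m + 4) × Fin (m + 4)) → ℝ)
    (hθ : memTheta (EE m) (pp m) θ) (x : Fin (m + 4)) (hx : (x : ℕ) ≠ 0) :
    expInf θ {x} = 1 + ∑ i : Fin (m + 4), (if (x, i) ∈ EE m then pp m (x, i) else 0) := by
  unfold expInf
  have key : ∀ c : Finset (Fin (m + 4) × Fin (m + 4)),
      θ c * (R c {x} : ℝ) = θ c + ∑ i : Fin (m + 4), (if (x, i) ∈ c then θ c else 0) := by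
    intro c
    by_cases hc0 : θ c = 0
    · simp [hc0]
    · have hcE := hθ.2.1 c hc0
      have hxx : (x, x) ∉ c := by
        intro h
        have := (mem_EE' m x x).1 (hcE h)
        omega
      rw [R_singleton_real c x (h2_of_subset m c hcE x hx) hxx, mul_add, mul_one,
        Finset.mul_sum]
      congr 1
      refine Finset.sum_congr rfl fun i _ => ?_
      split <;> simp
  rw [Finset.sum_congr rfl fun c _ => key c, Finset.sum_add_distrib, hθ.2.2.1,
    Finset.sum_comm]
  congr 1
  refine Finset.sum_congr rfl fun i _ => ?_
  by_cases hin : (x, i) ∈ EE m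
  · rw [if_pos hin, hθ.2.2.2 _ hin]
  · rw [if_neg hin, marginal_zero _ _ _ hθ _ hin]

lemma expInf_mid (m : ℕ) (θ : Finset (Fin (m + 4) × Fin (m + 4)) → ℝ)
    (hθ : memTheta (EE m) (pp m) θ) (a : Fin (m + 4))
    (ha : (a : ℕ) = 1 ∨ (a : ℕ) = 2) :
    expInf θ {a} = 1 + (m + 1) / 4 := by
  rw [expInf_singleton m θ hθ a (by omega)]
  have hterm : ∀ i : Fin (m + 4), (if (a, i) ∈ EE m then pp m (a, i) else 0)
      = (if 3 ≤ (i : ℕ) then (1/4 : ℝ) else 0) := by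
    intro i
    by_cases h3 : 3 ≤ (i : ℕ)
    · rw [if_pos ((mem_EE' m a i).2 (Or.inr ⟨ha, h3⟩)), if_pos h3, pp_eval,
        if_neg (by omega)]
    · rw [if_neg (fun h => by
        rcases (mem_EE' m a i).1 h with ⟨h1, h2⟩ | ⟨h1, h2⟩ <;> omega), if_neg h3]
  rw [Finset.sum_congr rfl fun i _ => hterm i, sum_fin_ge3]
  ring

lemma expInf_leaf (m : ℕ) (θ : Finset (Fin (m + 4) × Fin (m + 4)) → ℝ)
    (hθ : memTheta (EE m) (pp m) θ) (x : Fin (m + 4)) (hx : 3 ≤ (x : ℕ)) :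
    expInf θ {x} = 1 := by
  rw [expInf_singleton m θ hθ x (by omega)]
  rw [Finset.sum_eq_zero fun i _ => if_neg (fun h => by
    rcases (mem_EE' m x i).1 h with ⟨h1, h2⟩ | ⟨h1, h2⟩ <;> omega)]
  ring

/-! ### The adversarial two-point distribution -/

def ctop (m : ℕ) : Finset (Fin (m + 4) × Fin (m + 4)) := {(u0 m, v1 m), (u0 m, v2 m)}

def cbot (m : ℕ) : Finset (Fin (m + 4) × Fin (m + 4)) :=
  (EE m).filter fun e => (e.1 : ℕ) ≠ 0

noncomputable def thetaStar (m : ℕ) : Finset (Fin (m + 4) × Fin (m + 4)) → ℝ :=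
  fun c => if c = ctop m then 3/4 else if c = cbot m then 1/4 else 0

lemma mem_ctop (m : ℕ) (e : Fin (m + 4) × Fin (m + 4)) :
    e ∈ ctop m ↔ e = (u0 m, v1 m) ∨ e = (u0 m, v2 m) := by
  simp [ctop]

lemma mem_cbot (m : ℕ) (e : Fin (m + 4) × Fin (m + 4)) :
    e ∈ cbot m ↔ (((e.1 : ℕ) = 1 ∨ (e.1 : ℕ) = 2) ∧ 3 ≤ (e.2 : ℕ)) := by
  constructor
  · intro h
    rw [cbot, Finset.mem_filter] at h
    obtain ⟨he, h0⟩ := h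
    rcases (mem_EE' m e.1 e.2).1 (by simpa using he) with ⟨h1, h2⟩ | h
    · exact absurd h1 h0
    · exact h
  · intro h
    rw [cbot, Finset.mem_filter]
    constructor
    · have : (e.1, e.2) ∈ EE m := (mem_EE' m e.1 e.2).2 (Or.inr h)
      simpa using this
    · omega

lemma ctop_ne_cbot (m : ℕ) : ctop m ≠ cbot m := by
  intro h
  have h1 : (u0 m, v1 m) ∈ ctop m := (mem_ctop m _).2 (Or.inl rfl)
  rw [h, mem_cbot] at h1
  simp at h1

lemma memTheta_thetaStar (m : ℕ) : memTheta (EE m) (pp m) (thetaStar m) := by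
  refine ⟨?_, ?_, ?_, ?_⟩
  · intro c
    rw [thetaStar]
    split_ifs <;> norm_num
  · intro c h
    rw [thetaStar] at h
    split_ifs at h with h1 h2
    · subst h1
      intro e he
      rcases (mem_ctop m e).1 he with rfl | rfl
      · exact (mem_EE' m _ _).2 (Or.inl (by simp))
      · exact (mem_EE' m _ _).2 (Or.inl (by simp))
    · subst h2
      exact Finset.filter_subset _ _
    · exact absurd rfl h
  · rw [sum_twopoint (ctop m) (cbot m) (ctop_ne_cbot m) (thetaStar m)
      (fun c h1 h2 => by rw [thetaStar, if_neg h1, if_neg h2])]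
    rw [thetaStar, thetaStar, if_pos rfl, if_neg (ctop_ne_cbot m).symm, if_pos rfl]
    norm_num
  · intro e he
    have hsplit : (∑ c : Finset (Fin (m + 4) × Fin (m + 4)),
        if e ∈ c then thetaStar m c else 0)
        = (if e ∈ ctop m then thetaStar m (ctop m) else 0)
          + (if e ∈ cbot m then thetaStar m (cbot m) else 0) := by
      refine sum_twopoint (ctop m) (cbot m) (ctop_ne_cbot m) _ (fun c h1 h2 => ?_)
      rw [thetaStar, if_neg h1, if_neg h2]
      split <;> rfl
    rw [hsplit, thetaStar, thetaStar, if_pos rfl, if_neg (ctop_ne_cbot m).symm, if_pos rfl]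
    obtain ⟨e1, e2⟩ := e
    rcases (mem_EE' m e1 e2).1 he with ⟨h1, h2⟩ | ⟨h1, h2⟩
    · have he1 : e1 = u0 m := by
        apply Fin.ext; simpa using h1
      have hetop : (e1, e2) ∈ ctop m := by
        rw [mem_ctop]
        rcases h2 with h2 | h2
        · exact Or.inl (by rw [he1]; congr 1; apply Fin.ext; simpa using h2)
        · exact Or.inr (by rw [he1]; congr 1; apply Fin.ext; simpa using h2)
      have hebot : (e1, e2) ∉ cbot m := by
        rw [mem_cbot]
        simp only [not_and]
        omega
      rw [if_pos hetop, if_neg hebot, pp_eval, if_pos h1]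
      norm_num
    · have hetop : (e1, e2) ∉ ctop m := by
        rw [mem_ctop]
        rintro (h | h) <;>
          · injection h with ha hb
            rw [ha] at h1
            simp at h1
      have hebot : (e1, e2) ∈ cbot m := (mem_cbot m _).2 ⟨h1, h2⟩
      rw [if_pos hebot, if_neg hetop, pp_eval, if_neg (by omega)]
      norm_num

lemma v1_ne_v2 (m : ℕ) : v1 m ≠ v2 m := by
  intro h
  have := congrArg Fin.val h
  simp at this

lemma R_ctop (m : ℕ) : (R (ctop m) {u0 m} : ℝ) = 3 := by
  have h2 : ∀ b z : Fin (m + 4), (u0 m, b) ∈ ctop m → (b, z) ∉ ctop m := by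
    intro b z hb hz
    have hb12 : (b : ℕ) = 1 ∨ (b : ℕ) = 2 := by
      rcases (mem_ctop m _).1 hb with h | h
      · left; injection h with h1 h2'; rw [h2']; simp
      · right; injection h with h1 h2'; rw [h2']; simp
    have hb0 : (b : ℕ) = 0 := by
      rcases (mem_ctop m _).1 hz with h | h <;>
        · injection h with h1 h2'
          rw [h1]
          simp
    omega
  have hxx : (u0 m, u0 m) ∉ ctop m := by
    intro h
    rcases (mem_ctop m _).1 h with h | h <;>
      · injection h with ha hb'
        have := congrArg Fin.val hb'
        simp at this
  rw [R_singleton_real (ctop m) (u0 m) h2 hxx]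
  have hmem : ∀ i : Fin (m + 4), ((u0 m, i) ∈ ctop m) ↔ (i = v1 m ∨ i = v2 m) := by
    intro i
    rw [mem_ctop]
    constructor
    · rintro (h | h)
      · exact Or.inl (congrArg Prod.snd h)
      · exact Or.inr (congrArg Prod.snd h)
    · rintro (rfl | rfl)
      · exact Or.inl rfl
      · exact Or.inr rfl
  have hsum : (∑ i : Fin (m + 4), if (u0 m, i) ∈ ctop m then (1 : ℝ) else 0)
      = ∑ i : Fin (m + 4),
          ((if i = v1 m then (1 : ℝ) else 0) + (if i = v2 m then (1 : ℝ) else 0)) := by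
    refine Finset.sum_congr rfl fun i _ => ?_
    rw [if_congr (hmem i) rfl rfl]
    by_cases h1 : i = v1 m <;> by_cases h2' : i = v2 m
    · exact absurd (h1 ▸ h2') (v1_ne_v2 m)
    · simp [h1, h2', v1_ne_v2 m]
    · simp [h1, h2', (v1_ne_v2 m).symm]
    · simp [h1, h2']
  rw [hsum, Finset.sum_add_distrib]
  simp [Finset.sum_ite_eq']
  norm_num

lemma R_cbot (m : ℕ) : (R (cbot m) {u0 m} : ℝ) = 1 := by
  have hnot : ∀ b : Fin (m + 4), (u0 m, b) ∉ cbot m := by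
    intro b h
    have := (mem_cbot m _).1 h
    simp at this
  rw [R_singleton_real (cbot m) (u0 m) (fun b z hb _ => absurd hb (hnot b)) (hnot _)]
  rw [Finset.sum_eq_zero fun i _ => if_neg (hnot i)]
  norm_num

/-! ### fcorr bounds -/

lemma expInf_thetaStar_u0 (m : ℕ) : expInf (thetaStar m) {u0 m} = 5/2 := by
  unfold expInf
  rw [sum_twopoint (ctop m) (cbot m) (ctop_ne_cbot m) _
    (fun c h1 h2 => by rw [thetaStar, if_neg h1, if_neg h2, zero_mul])]
  have h1 : thetaStar m (ctop m) = 3/4 := if_pos rfl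
  have h2 : thetaStar m (cbot m) = 1/4 := by
    rw [thetaStar, if_neg (ctop_ne_cbot m).symm, if_pos rfl]
  rw [h1, h2, R_ctop, R_cbot]
  norm_num

lemma fcorr_u0_le (m : ℕ) : fcorr (EE m) (pp m) {u0 m} ≤ 5/2 := by
  have h := fcorr_le (EE m) (pp m) {u0 m} (thetaStar m) (memTheta_thetaStar m)
  rwa [expInf_thetaStar_u0] at h

lemma fcorr_v1_ge (m : ℕ) : 1 + (m + 1) / 4 ≤ fcorr (EE m) (pp m) {v1 m} :=
  le_fcorr _ _ _ _ (thetaStar m) (memTheta_thetaStar m)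
    (fun θ hθ => le_of_eq (expInf_mid m θ hθ (v1 m) (Or.inl (by simp))).symm)

/-! ### Lower bound for the independent-cascade value of the seed `u0` -/

lemma card_filter_real {α : Type*} (s : Finset α) (q : α → Prop) [DecidablePred q] :
    (((s.filter q).card : ℕ) : ℝ) = ∑ i ∈ s, if q i then (1 : ℝ) else 0 := by
  rw [Finset.card_filter]
  push_cast
  rfl

lemma R_u0_ge (m : ℕ) (c : Finset (Fin (m + 4) × Fin (m + 4))) (hc : c ⊆ EE m) :
    1 + (∑ i : Fin (m + 4), if (u0 m, i) ∈ c then (1 : ℝ) else 0)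
      + (∑ l ∈ Finset.univ.filter (fun l : Fin (m + 4) => 3 ≤ (l : ℕ)),
          ((if (u0 m, v1 m) ∈ c ∧ (v1 m, l) ∈ c then (1 : ℝ) else 0)
           + (if (u0 m, v2 m) ∈ c ∧ (v2 m, l) ∈ c then (1 : ℝ) else 0)
           - (if ((u0 m, v1 m) ∈ c ∧ (v1 m, l) ∈ c) ∧ ((u0 m, v2 m) ∈ c ∧ (v2 m, l) ∈ c)
              then (1 : ℝ) else 0)))
      ≤ (R c {u0 m} : ℝ) := by
  classical
  set L3 := Finset.univ.filter (fun l : Fin (m + 4) => 3 ≤ (l : ℕ)) with hL3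
  set J := Finset.univ.filter (fun i : Fin (m + 4) => (u0 m, i) ∈ c) with hJ
  set K := L3.filter (fun l => ((u0 m, v1 m) ∈ c ∧ (v1 m, l) ∈ c)
      ∨ ((u0 m, v2 m) ∈ c ∧ (v2 m, l) ∈ c)) with hK
  have hGsub : ∀ i ∈ insert (u0 m) (J ∪ K), influenced c {u0 m} i := by
    intro i hi
    rw [Finset.mem_insert, Finset.mem_union] at hi
    refine ⟨u0 m, Finset.mem_singleton_self _, ?_⟩
    rcases hi with rfl | hi | hi
    · exact Relation.ReflTransGen.refl
    · rw [hJ, Finset.mem_filter] at hi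
      exact Relation.ReflTransGen.single hi.2
    · rw [hK, Finset.mem_filter] at hi
      rcases hi.2 with ⟨h1, h2⟩ | ⟨h1, h2⟩
      · exact Relation.ReflTransGen.head h1 (Relation.ReflTransGen.single h2)
      · exact Relation.ReflTransGen.head h1 (Relation.ReflTransGen.single h2)
  have hcard : (((insert (u0 m) (J ∪ K)).card : ℕ) : ℝ) ≤ (R c {u0 m} : ℝ) :=
    R_ge_of_subset c {u0 m} _ hGsub
  have hu0J : u0 m ∉ J := by
    rw [hJ, Finset.mem_filter]
    rintro ⟨-, h⟩
    have := (mem_EE' m _ _).1 (hc h)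
    simp at this
  have hu0K : u0 m ∉ K := by
    rw [hK, Finset.mem_filter, hL3, Finset.mem_filter]
    rintro ⟨⟨-, h⟩, -⟩
    simp at h
  have hdisj : Disjoint J K := by
    rw [Finset.disjoint_left]
    intro i hiJ hiK
    rw [hJ, Finset.mem_filter] at hiJ
    have hE := (mem_EE' m _ _).1 (hc hiJ.2)
    rw [hK, Finset.mem_filter, hL3, Finset.mem_filter] at hiK
    have h3 := hiK.1.2
    simp only [u0_val] at hE
    omega
  rw [Finset.card_insert_of_notMem (by simp [hu0J, hu0K]),
    Finset.card_union_of_disjoint hdisj] at hcard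
  refine le_trans ?_ hcard
  have hJcard : ((J.card : ℕ) : ℝ)
      = ∑ i : Fin (m + 4), if (u0 m, i) ∈ c then (1 : ℝ) else 0 := by
    rw [hJ]; exact card_filter_real _ _
  have hKcard : (∑ l ∈ L3,
      ((if (u0 m, v1 m) ∈ c ∧ (v1 m, l) ∈ c then (1 : ℝ) else 0)
       + (if (u0 m, v2 m) ∈ c ∧ (v2 m, l) ∈ c then (1 : ℝ) else 0)
       - (if ((u0 m, v1 m) ∈ c ∧ (v1 m, l) ∈ c) ∧ ((u0 m, v2 m) ∈ c ∧ (v2 m, l) ∈ c)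
          then (1 : ℝ) else 0))) ≤ ((K.card : ℕ) : ℝ) := by
    rw [hK, card_filter_real]
    refine Finset.sum_le_sum fun l _ => ?_
    by_cases hA : (u0 m, v1 m) ∈ c ∧ (v1 m, l) ∈ c <;>
      by_cases hB : (u0 m, v2 m) ∈ c ∧ (v2 m, l) ∈ c <;>
      simp [hA, hB]
  push_cast
  push_cast at hJcard hKcard
  linarith [hJcard, hKcard]

lemma cylinder_pair (m : ℕ) (l : Fin (m + 4)) (hl : 3 ≤ (l : ℕ)) (a : Fin (m + 4))
    (ha : (a : ℕ) = 1 ∨ (a : ℕ) = 2) :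
    (∑ c : Finset (Fin (m + 4) × Fin (m + 4)),
        if (u0 m, a) ∈ c ∧ (a, l) ∈ c then thetaIC (EE m) (pp m) c else 0) = 3/16 := by
  have hne : (u0 m, a) ≠ (a, l) := by
    intro h
    have := congrArg (fun x => ((x.1 : Fin (m + 4)) : ℕ)) h
    simp at this
    omega
  have hsub : ({(u0 m, a), (a, l)} : Finset (Fin (m + 4) × Fin (m + 4))) ⊆ EE m := by
    intro e he
    rcases Finset.mem_insert.1 he with rfl | he
    · exact (mem_EE' m _ _).2 (Or.inl (by simpa using ha))
    · rw [Finset.mem_singleton] at he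
      subst he
      exact (mem_EE' m _ _).2 (Or.inr (by simpa using ⟨ha, hl⟩))
  have hiff : ∀ c : Finset (Fin (m + 4) × Fin (m + 4)),
      ((u0 m, a) ∈ c ∧ (a, l) ∈ c) ↔ ({(u0 m, a), (a, l)} : Finset _) ⊆ c := by
    intro c
    rw [Finset.insert_subset_iff, Finset.singleton_subset_iff]
  rw [Finset.sum_congr rfl fun c _ => if_congr (hiff c) rfl rfl, cyl _ _ _ hsub,
    Finset.prod_pair hne, pp_eval, pp_eval, if_pos (by simp), if_neg (by omega)]
  norm_num

lemma cylinder_quad (m : ℕ) (l : Fin (m + 4)) (hl : 3 ≤ (l : ℕ)) :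
    (∑ c : Finset (Fin (m + 4) × Fin (m + 4)),
        if ((u0 m, v1 m) ∈ c ∧ (v1 m, l) ∈ c) ∧ ((u0 m, v2 m) ∈ c ∧ (v2 m, l) ∈ c)
        then thetaIC (EE m) (pp m) c else 0) = 9/256 := by
  have fst_ne : ∀ (x y : Fin (m + 4) × Fin (m + 4)), ((x.1 : ℕ) ≠ (y.1 : ℕ)) → x ≠ y := by
    intro x y h hxy
    exact h (by rw [hxy])
  have h12 : (v1 m, l) ≠ (v2 m, l) := fst_ne _ _ (by simp)
  have h01 : (u0 m, v2 m) ∉ ({(v1 m, l), (v2 m, l)} : Finset _) := by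
    intro h
    rcases Finset.mem_insert.1 h with h | h
    · exact fst_ne _ _ (by simp) h
    · exact fst_ne _ _ (by simp) (Finset.mem_singleton.1 h)
  have h00 : (u0 m, v1 m) ∉ ({(u0 m, v2 m), (v1 m, l), (v2 m, l)} : Finset _) := by
    intro h
    rcases Finset.mem_insert.1 h with h | h
    · have := congrArg (fun x => ((x.2 : Fin (m + 4)) : ℕ)) h
      simp at this
    · rcases Finset.mem_insert.1 h with h | h
      · exact fst_ne _ _ (by simp) h
      · exact fst_ne _ _ (by simp) (Finset.mem_singleton.1 h)
  have hsub : ({(u0 m, v1 m), (u0 m, v2 m), (v1 m, l), (v2 m, l)} : Finset _) ⊆ EE m := by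
    intro e he
    simp only [Finset.mem_insert, Finset.mem_singleton] at he
    rcases he with rfl | rfl | rfl | rfl
    · exact (mem_EE' m _ _).2 (Or.inl (by simp))
    · exact (mem_EE' m _ _).2 (Or.inl (by simp))
    · exact (mem_EE' m _ _).2 (Or.inr (by simpa using hl))
    · exact (mem_EE' m _ _).2 (Or.inr (by simpa using hl))
  have hiff : ∀ c : Finset (Fin (m + 4) × Fin (m + 4)),
      (((u0 m, v1 m) ∈ c ∧ (v1 m, l) ∈ c) ∧ ((u0 m, v2 m) ∈ c ∧ (v2 m, l) ∈ c))
      ↔ ({(u0 m, v1 m), (u0 m, v2 m), (v1 m, l), (v2 m, l)} : Finset _) ⊆ c := by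
    intro c
    simp only [Finset.insert_subset_iff, Finset.singleton_subset_iff]
    tauto
  rw [Finset.sum_congr rfl fun c _ => if_congr (hiff c) rfl rfl, cyl _ _ _ hsub,
    Finset.prod_insert h00, Finset.prod_insert h01, Finset.prod_pair h12]
  norm_num [pp_eval]

lemma fic_u0_ge (m : ℕ) :
    1 + 3/2 + (m + 1) * (87/256) ≤ fic (EE m) (pp m) {u0 m} := by
  classical
  have hθ := memTheta_thetaIC (EE m) (pp m) (pp_nonneg m) (pp_le_one m)
  set θ := thetaIC (EE m) (pp m) with hθdef
  set L3 := Finset.univ.filter (fun l : Fin (m + 4) => 3 ≤ (l : ℕ)) with hL3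
  have step1 : (∑ c : Finset (Fin (m + 4) × Fin (m + 4)), θ c *
      (1 + (∑ i : Fin (m + 4), if (u0 m, i) ∈ c then (1 : ℝ) else 0)
      + (∑ l ∈ L3,
          ((if (u0 m, v1 m) ∈ c ∧ (v1 m, l) ∈ c then (1 : ℝ) else 0)
           + (if (u0 m, v2 m) ∈ c ∧ (v2 m, l) ∈ c then (1 : ℝ) else 0)
           - (if ((u0 m, v1 m) ∈ c ∧ (v1 m, l) ∈ c) ∧ ((u0 m, v2 m) ∈ c ∧ (v2 m, l) ∈ c)
              then (1 : ℝ) else 0)))))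
      ≤ fic (EE m) (pp m) {u0 m} := by
    unfold fic expInf
    refine Finset.sum_le_sum fun c _ => ?_
    by_cases hc0 : θ c = 0
    · rw [hc0, zero_mul]
      exact mul_nonneg (thetaIC_nonneg _ _ (pp_nonneg m) (pp_le_one m) c) (Nat.cast_nonneg _)
    · exact mul_le_mul_of_nonneg_left (R_u0_ge m c (hθ.2.1 c hc0)) (hθ.1 c)
  refine le_trans (le_of_eq ?_) step1
  have hsplit : ∀ c : Finset (Fin (m + 4) × Fin (m + 4)), θ c *
      (1 + (∑ i : Fin (m + 4), if (u0 m, i) ∈ c then (1 : ℝ) else 0)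
      + (∑ l ∈ L3,
          ((if (u0 m, v1 m) ∈ c ∧ (v1 m, l) ∈ c then (1 : ℝ) else 0)
           + (if (u0 m, v2 m) ∈ c ∧ (v2 m, l) ∈ c then (1 : ℝ) else 0)
           - (if ((u0 m, v1 m) ∈ c ∧ (v1 m, l) ∈ c) ∧ ((u0 m, v2 m) ∈ c ∧ (v2 m, l) ∈ c)
              then (1 : ℝ) else 0))))
      = θ c + (∑ i : Fin (m + 4), if (u0 m, i) ∈ c then θ c else 0)
        + (∑ l ∈ L3,
          ((if (u0 m, v1 m) ∈ c ∧ (v1 m, l) ∈ c then θ c else 0)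
           + (if (u0 m, v2 m) ∈ c ∧ (v2 m, l) ∈ c then θ c else 0)
           - (if ((u0 m, v1 m) ∈ c ∧ (v1 m, l) ∈ c) ∧ ((u0 m, v2 m) ∈ c ∧ (v2 m, l) ∈ c)
              then θ c else 0))) := by
    intro c
    rw [mul_add, mul_add, mul_one, Finset.mul_sum, Finset.mul_sum]
    congr 1
    · congr 1
      refine Finset.sum_congr rfl fun i _ => ?_
      rw [mul_ite, mul_one, mul_zero]
    · refine Finset.sum_congr rfl fun l _ => ?_
      rw [mul_sub, mul_add, mul_ite, mul_ite, mul_ite, mul_one, mul_zero]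
  rw [Finset.sum_congr rfl fun c _ => hsplit c, Finset.sum_add_distrib,
    Finset.sum_add_distrib, hθ.2.2.1]
  have hS1 : (∑ c : Finset (Fin (m + 4) × Fin (m + 4)),
      ∑ i : Fin (m + 4), if (u0 m, i) ∈ c then θ c else 0) = 3/2 := by
    rw [Finset.sum_comm]
    have hterm : ∀ i : Fin (m + 4),
        (∑ c : Finset (Fin (m + 4) × Fin (m + 4)), if (u0 m, i) ∈ c then θ c else 0)
        = if ((i : ℕ) = 1 ∨ (i : ℕ) = 2) then (3/4 : ℝ) else 0 := by
      intro i
      by_cases hi : (i : ℕ) = 1 ∨ (i : ℕ) = 2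
      · rw [if_pos hi]
        have hmem : (u0 m, i) ∈ EE m := (mem_EE' m _ _).2 (Or.inl (by simpa using hi))
        rw [hθ.2.2.2 _ hmem, pp_eval, if_pos (by simp)]
      · rw [if_neg hi]
        refine marginal_zero _ _ _ hθ _ ?_
        intro h
        rcases (mem_EE' m _ _).1 h with ⟨h1, h2⟩ | ⟨h1, h2⟩
        · exact hi (by simpa using h2)
        · simp at h1
    rw [Finset.sum_congr rfl fun i _ => hterm i, sum_fin_12]
    norm_num
  have hS2 : (∑ c : Finset (Fin (m + 4) × Fin (m + 4)), ∑ l ∈ L3,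
      ((if (u0 m, v1 m) ∈ c ∧ (v1 m, l) ∈ c then θ c else 0)
       + (if (u0 m, v2 m) ∈ c ∧ (v2 m, l) ∈ c then θ c else 0)
       - (if ((u0 m, v1 m) ∈ c ∧ (v1 m, l) ∈ c) ∧ ((u0 m, v2 m) ∈ c ∧ (v2 m, l) ∈ c)
          then θ c else 0))) = (m + 1) * (87/256) := by
    rw [Finset.sum_comm]
    have hterm : ∀ l ∈ L3,
        (∑ c : Finset (Fin (m + 4) × Fin (m + 4)),
          ((if (u0 m, v1 m) ∈ c ∧ (v1 m, l) ∈ c then θ c else 0)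
           + (if (u0 m, v2 m) ∈ c ∧ (v2 m, l) ∈ c then θ c else 0)
           - (if ((u0 m, v1 m) ∈ c ∧ (v1 m, l) ∈ c) ∧ ((u0 m, v2 m) ∈ c ∧ (v2 m, l) ∈ c)
              then θ c else 0))) = 87/256 := by
      intro l hl
      have hlv : 3 ≤ (l : ℕ) := by
        rw [hL3, Finset.mem_filter] at hl
        exact hl.2
      rw [Finset.sum_sub_distrib, Finset.sum_add_distrib, hθdef,
        cylinder_pair m l hlv (v1 m) (Or.inl (by simp)),
        cylinder_pair m l hlv (v2 m) (Or.inr (by simp)),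
        cylinder_quad m l hlv]
      norm_num
    rw [Finset.sum_congr rfl hterm, Finset.sum_const, nsmul_eq_mul]
    have := card_leaves m
    rw [hL3, this]
  rw [hS1, hS2]

/-! ### Independent-cascade values of the other seeds -/

lemma fic_mid (m : ℕ) (a : Fin (m + 4)) (ha : (a : ℕ) = 1 ∨ (a : ℕ) = 2) :
    fic (EE m) (pp m) {a} = 1 + (m + 1) / 4 :=
  expInf_mid m _ (memTheta_thetaIC _ _ (pp_nonneg m) (pp_le_one m)) a ha

lemma fic_leaf (m : ℕ) (x : Fin (m + 4)) (hx : 3 ≤ (x : ℕ)) :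
    fic (EE m) (pp m) {x} = 1 :=
  expInf_leaf m _ (memTheta_thetaIC _ _ (pp_nonneg m) (pp_le_one m)) x hx

/-- there is a constant `C > 0` such that for infinitely many `n` there
is a directed graph on `n` nodes with edge likelihoods for which the price of
correlations with budget `k = 1` is at most `C/n`. -/
theorem poc_arbitrarily_small :
    ∃ C : ℝ, 0 < C ∧ ∀ N : ℕ, ∃ n : ℕ, N ≤ n ∧
      ∃ (E : Finset (Fin n × Fin n)) (p : Fin n × Fin n → ℝ),
        (∀ e ∈ E, 0 ≤ p e ∧ p e ≤ 1) ∧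
        ∀ Sic : Finset (Fin n), Sic.card ≤ 1 →
          (∀ S : Finset (Fin n), S.card ≤ 1 → fic E p S ≤ fic E p Sic) →
          ∀ Scorr : Finset (Fin n), Scorr.card ≤ 1 →
            (∀ S : Finset (Fin n), S.card ≤ 1 → fcorr E p S ≤ fcorr E p Scorr) →
            fcorr E p Sic ≤ (C / (n : ℝ)) * fcorr E p Scorr := by
  refine ⟨10, by norm_num, fun N => ⟨N + 4, by omega, EE N, pp N, ?_, ?_⟩⟩
  · intro e _
    exact ⟨pp_nonneg N e, pp_le_one N e⟩
  · intro Sic hSic hSicmax Scorr _ hScorrmax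
    have hm : (0 : ℝ) ≤ (N : ℝ) := Nat.cast_nonneg N
    have hficu : fic (EE N) (pp N) {u0 N} ≤ fic (EE N) (pp N) Sic :=
      hSicmax {u0 N} (by simp)
    have hficlow := fic_u0_ge N
    have hSic_eq : Sic = {u0 N} := by
      obtain ⟨x, hx⟩ := Finset.card_le_one_iff_subset_singleton.1 hSic
      rcases Finset.subset_singleton_iff.1 hx with rfl | rfl
      · exfalso
        rw [show fic (EE N) (pp N) (∅ : Finset (Fin (N + 4))) = 0 from expInf_empty _]
          at hficu
        linarith
      · rcases lt_or_ge ((x : ℕ)) 3 with h3 | h3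
        · have hcases : (x : ℕ) = 0 ∨ (x : ℕ) = 1 ∨ (x : ℕ) = 2 := by omega
          rcases hcases with h | h | h
          · congr 1
            exact Fin.ext (by simp [h])
          · exfalso
            rw [fic_mid N x (Or.inl h)] at hficu
            linarith
          · exfalso
            rw [fic_mid N x (Or.inr h)] at hficu
            linarith
        · exfalso
          rw [fic_leaf N x h3] at hficu
          linarith
    subst hSic_eq
    have h1 : fcorr (EE N) (pp N) {u0 N} ≤ 5 / 2 := fcorr_u0_le N
    have h2 : 1 + ((N : ℝ) + 1) / 4 ≤ fcorr (EE N) (pp N) Scorr := by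
      refine le_trans ?_ (hScorrmax {v1 N} (by simp))
      have := fcorr_v1_ge N
      exact_mod_cast this
    have hn : (0 : ℝ) < (N : ℝ) + 4 := by positivity
    have hcast : ((N + 4 : ℕ) : ℝ) = (N : ℝ) + 4 := by push_cast; ring
    rw [hcast]
    have hpos : (0 : ℝ) ≤ 10 / ((N : ℝ) + 4) := by positivity
    calc fcorr (EE N) (pp N) {u0 N} ≤ 5 / 2 := h1
      _ ≤ 10 / ((N : ℝ) + 4) * (1 + ((N : ℝ) + 1) / 4) := by
          rw [div_mul_eq_mul_div, le_div_iff₀ hn]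
          nlinarith [hm]
      _ ≤ 10 / ((N : ℝ) + 4) * fcorr (EE N) (pp N) Scorr :=
          mul_le_mul_of_nonneg_left h2 hpos

end CorrIM
end
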